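/- arXiv:nlin/0110018 — 7 statements merged into one kernel-verified Lean document; each statement's English description precedes it below -/
import Mathlib

section
/- Let (M, {·,·}) be a Poisson manifold and X a Poisson infinitesimal automorphism (X{f,g} = {X(f),g} + {f,X(g)} for all f,g). Suppose G_i (i in a finite index set J) are master integrals of X (X(X(G_i)) = 0) such that for all i,j there exist constants a_{ij}^k, b_{ij}^k with {G_i, G_j} = Σ_k (a_{ij}^k G_k + b_{ij}^k X(G_k)). Then {X(G_i), X(G_j)} = 0 for all i, j. -/
/-- Let `P` be a Poisson bracket on `A`, `X` a Poisson infinitesimal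
automorphism, and `G i` master integrals whose pairwise brackets are constant-coefficient
linear combinations of the `G k` and `X (G k)`. Then `{X(G i), X(G j)} = 0`. -/
theorem poisson_automorphism_bracket_of_integrals_vanishes
    {A : Type*} [CommRing A] [Algebra ℝ A] {ι : Type*} [Fintype ι]
    (P : A → A → A)
    (hskew : ∀ f g, P f g = - P g f)
    (hleib : ∀ f g h, P (f * g) h = f * P g h + P f h * g)
    (hjac : ∀ f g h, P f (P g h) + P g (P h f) + P h (P f g) = 0)
    (X : Derivation ℝ A A)
    (hX : ∀ f g, X (P f g) = P (X f) g + P f (X g))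
    (G : ι → A)
    (hmaster : ∀ i, X (X (G i)) = 0)
    (a b : ι → ι → ι → ℝ)
    (hbr : ∀ i j, P (G i) (G j) = ∑ k, (a i j k • G k + b i j k • X (G k))) :
    ∀ i j, P (X (G i)) (X (G j)) = 0 := by
  have hP0 : ∀ h, P 0 h = 0 := fun h => by
    have := hleib 0 0 h; simpa using this
  have hP0' : ∀ f, P f 0 = 0 := fun f => by rw [hskew, hP0, neg_zero]
  intro i j
  have key : X (X (P (G i) (G j)))
      = P (X (G i)) (X (G j)) + P (X (G i)) (X (G j)) := by
    rw [hX, map_add, hX, hX, hmaster, hmaster, hP0, hP0', add_zero, zero_add]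
  have hz : X (X (P (G i) (G j))) = 0 := by
    rw [hbr]
    simp [map_sum, hmaster]
  have h2 : (2 : ℝ) • P (X (G i)) (X (G j)) = 0 := by
    rw [two_smul, ← key, hz]
  calc P (X (G i)) (X (G j))
      = (2⁻¹ : ℝ) • ((2 : ℝ) • P (X (G i)) (X (G j))) := by
        rw [smul_smul]; norm_num
    _ = 0 := by rw [h2, smul_zero]
end

section
/- Under the same hypotheses (Poisson automorphism X, master integrals G_i with {G_i,G_j} a constant linear combination of the G_k and X(G_k)), for every i, j the bracket {G_i, X(G_j)} is a constant-coefficient linear combination of the functions X(G_k) only, i.e., in the expression {G_i, X(G_j)} = Σ_k (c_{ij}^k X(G_k) + d_{ij}^k G_k) with the G_k and X(G_k) linearly independent, all coefficients d_{ij}^k vanish. -/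
/-- Under the hypotheses of Statement 2, with the family `{G k, X (G k)}`
linearly independent over ℝ, in any expression
`{G i, X (G j)} = ∑ k (c k • X (G k) + d k • G k)` the coefficients `d` all vanish. -/
theorem poisson_automorphism_bracket_coefficients_vanish
    {A : Type*} [CommRing A] [Algebra ℝ A] {ι : Type*} [Fintype ι]
    (P : A → A → A)
    (hskew : ∀ f g, P f g = - P g f)
    (hleib : ∀ f g h, P (f * g) h = f * P g h + P f h * g)
    (hjac : ∀ f g h, P f (P g h) + P g (P h f) + P h (P f g) = 0)
    (X : Derivation ℝ A A)
    (hX : ∀ f g, X (P f g) = P (X f) g + P f (X g))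
    (G : ι → A)
    (hmaster : ∀ i, X (X (G i)) = 0)
    (a b : ι → ι → ι → ℝ)
    (hbr : ∀ i j, P (G i) (G j) = ∑ k, (a i j k • G k + b i j k • X (G k)))
    (hind : LinearIndependent ℝ (Sum.elim G (fun k => X (G k)))) :
    ∀ i j (c d : ι → ℝ),
      P (G i) (X (G j)) = ∑ k, (c k • X (G k) + d k • G k) → d = 0 := by
  intro i j c d hcd
  have hP0 : ∀ g : A, P 0 g = 0 := by
    intro g
    have h := hleib 0 0 g
    simpa using h
  have hP0' : ∀ f : A, P f 0 = 0 := by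
    intro f
    rw [hskew, hP0, neg_zero]
  -- Apply X to hcd
  have h2 : P (X (G i)) (X (G j)) = ∑ k, d k • X (G k) := by
    have h := congrArg X hcd
    rw [hX] at h
    simp only [map_sum, map_add, X.map_smul, hmaster, smul_zero, add_zero, zero_add, hP0'] at h
    exact h
  -- Apply X to hbr
  have h1 : P (X (G i)) (G j) + P (G i) (X (G j)) = ∑ k, a i j k • X (G k) := by
    have h := congrArg X (hbr i j)
    rw [hX] at h
    simp only [map_sum, map_add, X.map_smul, hmaster, smul_zero, add_zero, zero_add] at h
    exact h
  -- Apply X again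
  have h3 : P (X (G i)) (X (G j)) + P (X (G i)) (X (G j)) = 0 := by
    have h := congrArg X h1
    rw [map_add, hX, hX] at h
    simp only [map_sum, map_add, X.map_smul, hmaster, smul_zero, add_zero, zero_add,
      hP0, hP0', Finset.sum_const_zero] at h
    exact h
  have h4 : P (X (G i)) (X (G j)) = 0 := by
    have h2' : (2 : ℝ) • P (X (G i)) (X (G j)) = 0 := by
      rw [two_smul]; exact h3
    have := congrArg (fun y : A => (2 : ℝ)⁻¹ • y) h2'
    simpa [smul_smul] using this
  have h5 : ∑ k, d k • X (G k) = 0 := by rw [← h2, h4]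
  have h6 : ∑ s : ι ⊕ ι, (Sum.elim (fun _ => (0:ℝ)) d) s • (Sum.elim G (fun k => X (G k))) s = 0 := by
    rw [Fintype.sum_sum_type]
    simpa using h5
  have h7 := Fintype.linearIndependent_iff.mp hind _ h6
  funext k
  simpa using h7 (Sum.inr k)
end

section
/- Let R be a Nijenhuis (1,1)-tensor on a manifold M (its Nijenhuis torsion vanishes, equivalently L_{RZ}R = R L_Z R for all vector fields Z). If α is a closed 1-form such that α_1 = ᵗR α is also closed, then for every natural number i the 1-form α_i = (ᵗR)^i α_1 is closed. -/
open Polynomial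

/-- Lie bracket of vector fields on a normed space. -/
noncomputable def vbr {E : Type*} [NormedAddCommGroup E] [NormedSpace ℝ E]
    (X Y : E → E) : E → E :=
  fun x => fderiv ℝ Y x (X x) - fderiv ℝ X x (Y x)

/-- Application of a (1,1)-tensor to a vector field. -/
def tapp {E : Type*} [NormedAddCommGroup E] [NormedSpace ℝ E]
    (R : E → E →L[ℝ] E) (X : E → E) : E → E :=
  fun x => R x (X x)

/-- `R` is a Nijenhuis operator: its Nijenhuis torsion
`[RX,RY] − R[RX,Y] − R[X,RY] + R²[X,Y]` vanishes. -/
def IsNijenhuis {E : Type*} [NormedAddCommGroup E] [NormedSpace ℝ E]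
    (R : E → E →L[ℝ] E) : Prop :=
  ∀ X Y : E → E, ContDiff ℝ (⊤ : ℕ∞) X → ContDiff ℝ (⊤ : ℕ∞) Y → ∀ x,
    vbr (tapp R X) (tapp R Y) x - R x (vbr (tapp R X) Y x)
      - R x (vbr X (tapp R Y) x) + R x (R x (vbr X Y x)) = 0

/-- A 1-form `ω` is closed: its exterior differential vanishes,
`u(ω(v)) − v(ω(u)) = 0` for constant vector fields `u, v`. -/
def IsClosed1Form {E : Type*} [NormedAddCommGroup E] [NormedSpace ℝ E]
    (ω : E → E →L[ℝ] ℝ) : Prop :=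
  ∀ x u v, fderiv ℝ (fun y => ω y v) x u = fderiv ℝ (fun y => ω y u) x v

section Aux
variable {E : Type*} [NormedAddCommGroup E] [NormedSpace ℝ E]

lemma fderiv_clm_apply'' {F : Type*} [NormedAddCommGroup F] [NormedSpace ℝ F]
    {c : E → E →L[ℝ] F} {g : E → E} {x : E} (hc : DifferentiableAt ℝ c x)
    (hg : DifferentiableAt ℝ g x) (u : E) :
    fderiv ℝ (fun y => c y (g y)) x u = c x (fderiv ℝ g x u) + fderiv ℝ c x u (g x) := by
  rw [fderiv_clm_apply hc hg]; rfl

lemma fderiv_clm_const' {F : Type*} [NormedAddCommGroup F] [NormedSpace ℝ F]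
    {c : E → E →L[ℝ] F} {x : E} (hc : DifferentiableAt ℝ c x) (v u : E) :
    fderiv ℝ (fun y => c y v) x u = fderiv ℝ c x u v := by
  simpa using fderiv_clm_apply'' hc (differentiableAt_const v) u

lemma powRApply (R : E → E →L[ℝ] E) (x : E) (j : ℕ) (w : E) :
    ((R x) ^ j) (R x w) = ((R x) ^ (j + 1)) w := by
  rw [pow_succ]; rfl

lemma powApply_contDiff {R : E → E →L[ℝ] E} (hR : ContDiff ℝ (⊤ : ℕ∞) R) (k : ℕ) (v : E) :
    ContDiff ℝ (⊤ : ℕ∞) (fun y => ((R y) ^ k) v) := by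
  induction k with
  | zero => simpa using contDiff_const (c := v)
  | succ k ih =>
      have h : (fun y => ((R y) ^ (k + 1)) v) = fun y => R y (((R y) ^ k) v) := by
        funext y; rw [pow_succ']; rfl
      rw [h]; exact hR.clm_apply ih

noncomputable def Fp (R : E → E →L[ℝ] E) (k : ℕ) (x u v : E) : E :=
  fderiv ℝ (fun y => ((R y) ^ k) v) x u

noncomputable def Dp (R : E → E →L[ℝ] E) (α : E → E →L[ℝ] ℝ) (k : ℕ) (x u v : E) : ℝ :=
  fderiv ℝ (fun y => α y (((R y) ^ k) v)) x u

lemma Fp_zero (R : E → E →L[ℝ] E) (x u v : E) : Fp R 0 x u v = 0 := by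
  have h : (fun y => ((R y) ^ 0) v) = fun _ => v := by funext y; simp
  simp [Fp, h]

lemma Fp_succ {R : E → E →L[ℝ] E} (hR : ContDiff ℝ (⊤ : ℕ∞) R) (k : ℕ) (x u v : E) :
    Fp R (k + 1) x u v = R x (Fp R k x u v) + fderiv ℝ R x u (((R x) ^ k) v) := by
  have h : (fun y => ((R y) ^ (k + 1)) v) = fun y => R y (((R y) ^ k) v) := by
    funext y; rw [pow_succ']; rfl
  rw [Fp, h, fderiv_clm_apply'' ((hR.differentiable (by simp)).differentiableAt)
    (((powApply_contDiff hR k v).differentiable (by simp)).differentiableAt) u]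
  rfl

lemma Dp_eq {R : E → E →L[ℝ] E} {α : E → E →L[ℝ] ℝ} (hR : ContDiff ℝ (⊤ : ℕ∞) R)
    (hα : ContDiff ℝ (⊤ : ℕ∞) α) (k : ℕ) (x u v : E) :
    Dp R α k x u v = α x (Fp R k x u v) + fderiv ℝ α x u (((R x) ^ k) v) := by
  rw [Dp, fderiv_clm_apply'' ((hα.differentiable (by simp)).differentiableAt)
    (((powApply_contDiff hR k v).differentiable (by simp)).differentiableAt) u]
  rfl

end Aux

/-- if `R` is Nijenhuis and `α` is a closed 1-form such that
`α₁ = ᵗR α` is closed, then every `α_i = (ᵗR)^i α₁ = α ∘ R^{i+1}` is closed. -/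
theorem nijenhuis_preserves_closed_forms
    {E : Type*} [NormedAddCommGroup E] [NormedSpace ℝ E]
    (R : E → E →L[ℝ] E) (hRsmooth : ContDiff ℝ (⊤ : ℕ∞) (fun x => R x))
    (hNij : IsNijenhuis R)
    (α : E → E →L[ℝ] ℝ) (hαsmooth : ContDiff ℝ (⊤ : ℕ∞) (fun x => α x))
    (hα : IsClosed1Form α)
    (hα1 : IsClosed1Form (fun x => (α x).comp (R x))) :
    ∀ i : ℕ, IsClosed1Form (fun x => ((α x).comp (R x)).comp ((R x) ^ i)) := by
  have hRd : ∀ x : E, DifferentiableAt ℝ R x :=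
    fun x => (hRsmooth.differentiable (by simp)).differentiableAt
  -- Pointwise Nijenhuis identity for constant vector fields
  have hN : ∀ x u v : E,
      R x (fderiv ℝ R x u v) - R x (fderiv ℝ R x v u)
        - fderiv ℝ R x (R x u) v + fderiv ℝ R x (R x v) u = 0 := by
    intro x u v
    have h := hNij (fun _ => u) (fun _ => v) contDiff_const contDiff_const x
    have ht : ∀ X : E → E, tapp R X = fun y => R y (X y) := fun _ => rfl
    simp only [vbr, ht, fderiv_fun_const, Pi.zero_apply, ContinuousLinearMap.zero_apply,
      fderiv_clm_const' (hRd x), sub_zero, zero_sub, map_neg, map_zero, add_zero] at h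
    have h2 : -(R x (fderiv ℝ R x u v) - R x (fderiv ℝ R x v u)
        - fderiv ℝ R x (R x u) v + fderiv ℝ R x (R x v) u) = 0 := by
      rw [← h]; abel
    simpa using neg_eq_zero.mp h2
  -- The key combination of the `Fp`'s vanishes
  have hG : ∀ (k : ℕ) (x u v : E),
      (((Fp R (k + 1 + 1) x u v - Fp R (k + 1 + 1) x v u)
        - (Fp R (k + 1) x (R x u) v - Fp R (k + 1) x v (R x u)))
        - (Fp R (k + 1) x u (R x v) - Fp R (k + 1) x (R x v) u))
        + (Fp R k x (R x u) (R x v) - Fp R k x (R x v) (R x u)) = 0 := by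
    intro k
    induction k with
    | zero =>
        intro x u v
        simp only [Fp_succ hRsmooth, Fp_zero, map_zero, zero_add, pow_zero,
          ContinuousLinearMap.one_apply, powRApply, pow_one]
        rw [← hN x u v]; abel
    | succ k ih =>
        intro x u v
        have e2 :
            (((Fp R (k + 1 + 1 + 1) x u v - Fp R (k + 1 + 1 + 1) x v u)
              - (Fp R (k + 1 + 1) x (R x u) v - Fp R (k + 1 + 1) x v (R x u)))
              - (Fp R (k + 1 + 1) x u (R x v) - Fp R (k + 1 + 1) x (R x v) u))
              + (Fp R (k + 1) x (R x u) (R x v) - Fp R (k + 1) x (R x v) (R x u))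
            = R x ((((Fp R (k + 1 + 1) x u v - Fp R (k + 1 + 1) x v u)
              - (Fp R (k + 1) x (R x u) v - Fp R (k + 1) x v (R x u)))
              - (Fp R (k + 1) x u (R x v) - Fp R (k + 1) x (R x v) u))
              + (Fp R k x (R x u) (R x v) - Fp R k x (R x v) (R x u))) := by
          simp only [Fp_succ hRsmooth, powRApply, map_add, map_sub]
          abel
        rw [e2, ih x u v, map_zero]
  -- commutation of powers
  have hcomm : ∀ (x : E) (j : ℕ) (w : E), ((R x) ^ j) (R x w) = ((R x) ^ (j + 1)) w :=
    fun x j w => powRApply R x j w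
  -- symmetry of Dp for k = 0 and k = 1
  have sym0 : ∀ x u v : E, Dp R α 0 x u v = Dp R α 0 x v u := by
    intro x u v
    have h := hα x u v
    simpa only [Dp, pow_zero, ContinuousLinearMap.one_apply] using h
  have sym1 : ∀ x u v : E, Dp R α 1 x u v = Dp R α 1 x v u := by
    intro x u v
    have h := hα1 x u v
    simpa only [Dp, pow_one, ContinuousLinearMap.comp_apply] using h
  -- main induction
  have main : ∀ k : ℕ, (∀ x u v : E, Dp R α k x u v = Dp R α k x v u) ∧
      (∀ x u v : E, Dp R α (k + 1) x u v = Dp R α (k + 1) x v u) := by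
    intro k
    induction k with
    | zero => exact ⟨sym0, sym1⟩
    | succ k ih =>
        refine ⟨ih.2, ?_⟩
        intro x u v
        have e : Dp R α (k + 1 + 1) x u v - Dp R α (k + 1 + 1) x v u
            = (Dp R α (k + 1) x (R x u) v - Dp R α (k + 1) x v (R x u))
            + (Dp R α (k + 1) x u (R x v) - Dp R α (k + 1) x (R x v) u)
            - (Dp R α k x (R x u) (R x v) - Dp R α k x (R x v) (R x u))
            + α x ((((Fp R (k + 1 + 1) x u v - Fp R (k + 1 + 1) x v u)
              - (Fp R (k + 1) x (R x u) v - Fp R (k + 1) x v (R x u)))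
              - (Fp R (k + 1) x u (R x v) - Fp R (k + 1) x (R x v) u))
              + (Fp R k x (R x u) (R x v) - Fp R k x (R x v) (R x u))) := by
          simp only [Dp_eq hRsmooth hαsmooth, map_add, map_sub, hcomm]
          ring
        rw [ih.2 x (R x u) v, ih.2 x u (R x v), ih.1 x (R x u) (R x v),
          hG k x u v, map_zero] at e
        have : Dp R α (k + 1 + 1) x u v - Dp R α (k + 1 + 1) x v u = 0 := by
          rw [e]; ring
        linarith [this]
  -- conclude
  intro i x u v
  have hfun : ∀ w : E, (fun y => (((α y).comp (R y)).comp ((R y) ^ i)) w)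
      = fun y => α y (((R y) ^ (i + 1)) w) := by
    intro w; funext y
    simp only [ContinuousLinearMap.comp_apply]
    rw [pow_succ']
    rfl
  show fderiv ℝ (fun y => (((α y).comp (R y)).comp ((R y) ^ i)) v) x u
      = fderiv ℝ (fun y => (((α y).comp (R y)).comp ((R y) ^ i)) u) x v
  rw [hfun v, hfun u]
  exact (main i).2 x u v
end

section
/- (Oevel's theorem) Let R be a Nijenhuis operator on M with L_{X_0}R = 0 for a vector field X_0, and let Z_0 be a vector field with L_{Z_0}X_0 = λ X_0 and L_{Z_0}R = μ R for constants λ, μ. Define X_n = R^n X_0 and Z_n = R^n Z_0. Then for all n, m ≥ 0: L_{Z_n}R = μ R^{n+1}, [Z_n, Z_m] = μ(m−n) Z_{n+m}, and [Z_n, X_m] = (λ + mμ) X_{n+m}. -/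
/-- Lie derivative of a (1,1)-tensor `T` along a vector field `X`, evaluated on `Y`:
`(ℒ_X T)(Y) = [X, T Y] − T [X, Y]`. -/
noncomputable def lieD {E : Type*} [NormedAddCommGroup E] [NormedSpace ℝ E]
    (X : E → E) (T : E → E →L[ℝ] E) (Y : E → E) : E → E :=
  fun x => vbr X (tapp T Y) x - T x (vbr X Y x)

/-- Oevel's theorem: if `R` is a Nijenhuis recursion operator of `X₀`
(`ℒ_{X₀} R = 0`) and `Z₀` is conformal (`ℒ_{Z₀} X₀ = λ X₀`, `ℒ_{Z₀} R = μ R`), then with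
`X_n = R^n X₀`, `Z_n = R^n Z₀`:
`ℒ_{Z_n} R = μ R^{n+1}`, `[Z_n, Z_m] = μ(m−n) Z_{n+m}`, `[Z_n, X_m] = (λ+mμ) X_{n+m}`. -/
theorem oevel_theorem
    {E : Type*} [NormedAddCommGroup E] [NormedSpace ℝ E]
    (R : E → E →L[ℝ] E) (X₀ Z₀ : E → E) (lam mu : ℝ)
    (hRsmooth : ContDiff ℝ (⊤ : ℕ∞) (fun x => R x))
    (hX₀ : ContDiff ℝ (⊤ : ℕ∞) X₀) (hZ₀ : ContDiff ℝ (⊤ : ℕ∞) Z₀)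
    (hNij : IsNijenhuis R)
    (hrec : ∀ Y : E → E, ContDiff ℝ (⊤ : ℕ∞) Y → ∀ x, lieD X₀ R Y x = 0)
    (hZX : ∀ x, vbr Z₀ X₀ x = lam • X₀ x)
    (hZR : ∀ Y : E → E, ContDiff ℝ (⊤ : ℕ∞) Y → ∀ x, lieD Z₀ R Y x = mu • R x (Y x)) :
    (∀ n : ℕ, ∀ Y : E → E, ContDiff ℝ (⊤ : ℕ∞) Y → ∀ x,
        lieD ((tapp R)^[n] Z₀) R Y x = mu • ((R x) ^ (n + 1)) (Y x)) ∧
    (∀ n m : ℕ, ∀ x,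
        vbr ((tapp R)^[n] Z₀) ((tapp R)^[m] Z₀) x
          = (mu * ((m : ℝ) - (n : ℝ))) • ((tapp R)^[n + m] Z₀) x) ∧
    (∀ n m : ℕ, ∀ x,
        vbr ((tapp R)^[n] Z₀) ((tapp R)^[m] X₀) x
          = (lam + (m : ℝ) * mu) • ((tapp R)^[n + m] X₀) x) := by
  -- smoothness of iterates
  have hsm : ∀ (W : E → E), ContDiff ℝ (⊤ : ℕ∞) W → ∀ n, ContDiff ℝ (⊤ : ℕ∞) ((tapp R)^[n] W) := by
    intro W hW n
    induction n with
    | zero => simpa using hW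
    | succ n ih =>
      rw [Function.iterate_succ_apply']
      exact hRsmooth.clm_apply ih
  -- antisymmetry of the bracket
  have hanti : ∀ (X Y : E → E) (x : E), vbr X Y x = - vbr Y X x := by
    intro X Y x
    simp only [vbr, neg_sub]
  -- expansion: [Z, RW] = (lieD Z R W) + R [Z, W]
  have hexp : ∀ (Z W : E → E) (x : E),
      vbr Z (tapp R W) x = lieD Z R W x + R x (vbr Z W x) := by
    intro Z W x
    simp [lieD]
  -- powers vs iterates
  have hpow : ∀ (W : E → E) (k m : ℕ) (x : E),
      ((R x) ^ k) (((tapp R)^[m] W) x) = ((tapp R)^[m + k] W) x := by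
    intro W k
    induction k with
    | zero => intro m x; simp
    | succ k ih =>
      intro m x
      have : (R x) ^ (k + 1) = R x * (R x) ^ k := by
        rw [pow_succ']
      rw [this, ContinuousLinearMap.mul_apply, ih]
      show R x (((tapp R)^[m + k] W) x) = _
      rw [show m + (k + 1) = (m + k) + 1 by omega, Function.iterate_succ_apply']
      rfl
  -- Part 1
  have h1 : ∀ n : ℕ, ∀ Y : E → E, ContDiff ℝ (⊤ : ℕ∞) Y → ∀ x,
      lieD ((tapp R)^[n] Z₀) R Y x = mu • ((R x) ^ (n + 1)) (Y x) := by
    intro n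
    induction n with
    | zero =>
      intro Y hY x
      simpa [pow_one] using hZR Y hY x
    | succ n ih =>
      intro Y hY x
      have hZn := hsm Z₀ hZ₀ n
      have hN := hNij ((tapp R)^[n] Z₀) Y hZn hY x
      rw [Function.iterate_succ_apply']
      have key : lieD (tapp R ((tapp R)^[n] Z₀)) R Y x
          = R x (lieD ((tapp R)^[n] Z₀) R Y x) := by
        simp only [lieD, map_sub]
        have h2 : vbr (tapp R ((tapp R)^[n] Z₀)) (tapp R Y) x
              - R x (vbr (tapp R ((tapp R)^[n] Z₀)) Y x)
            = (vbr (tapp R ((tapp R)^[n] Z₀)) (tapp R Y) x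
                - R x (vbr (tapp R ((tapp R)^[n] Z₀)) Y x)
                - R x (vbr ((tapp R)^[n] Z₀) (tapp R Y) x)
                + R x (R x (vbr ((tapp R)^[n] Z₀) Y x)))
              + (R x (vbr ((tapp R)^[n] Z₀) (tapp R Y) x)
                - R x (R x (vbr ((tapp R)^[n] Z₀) Y x))) := by abel
        rw [h2, hN, zero_add]
      rw [key, ih Y hY x, map_smul]
      congr 1
      have : (R x) ^ (n + 1 + 1) = R x * (R x) ^ (n + 1) := by rw [pow_succ']
      rw [this, ContinuousLinearMap.mul_apply]
  -- Part 3 base: [Z_n, X₀] = lam • X_n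
  have h3base : ∀ n : ℕ, ∀ x, vbr ((tapp R)^[n] Z₀) X₀ x = lam • ((tapp R)^[n] X₀) x := by
    intro n
    induction n with
    | zero => intro x; simpa using hZX x
    | succ n ih =>
      intro x
      rw [Function.iterate_succ_apply', Function.iterate_succ_apply']
      rw [hanti, hexp, hrec ((tapp R)^[n] Z₀) (hsm Z₀ hZ₀ n) x, zero_add,
        hanti X₀ ((tapp R)^[n] Z₀) x, map_neg, neg_neg, ih x, map_smul]
      rfl
  -- Part 3
  have h3 : ∀ n m : ℕ, ∀ x,
      vbr ((tapp R)^[n] Z₀) ((tapp R)^[m] X₀) x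
        = (lam + (m : ℝ) * mu) • ((tapp R)^[n + m] X₀) x := by
    intro n m
    induction m with
    | zero => intro x; simpa using h3base n x
    | succ m ih =>
      intro x
      rw [Function.iterate_succ_apply' (tapp R) m X₀]
      rw [hexp, h1 n ((tapp R)^[m] X₀) (hsm X₀ hX₀ m) x, ih x, map_smul,
        hpow X₀ (n + 1) m x]
      have e1 : R x (((tapp R)^[n + m] X₀) x) = ((tapp R)^[n + (m + 1)] X₀) x := by
        rw [show n + (m + 1) = (n + m) + 1 by omega, Function.iterate_succ_apply']
        rfl
      rw [e1, show m + (n + 1) = n + (m + 1) by omega, ← add_smul]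
      congr 1
      push_cast
      ring
  -- Part 2 base: [Z₀, Z_m] = mu * m • Z_m
  have h2base : ∀ m : ℕ, ∀ x,
      vbr Z₀ ((tapp R)^[m] Z₀) x = (mu * (m : ℝ)) • ((tapp R)^[m] Z₀) x := by
    intro m
    induction m with
    | zero =>
      intro x
      simp [vbr]
    | succ m ih =>
      intro x
      rw [Function.iterate_succ_apply' (tapp R) m Z₀]
      rw [hexp, hZR ((tapp R)^[m] Z₀) (hsm Z₀ hZ₀ m) x, ih x, map_smul, ← add_smul,
        show mu + mu * (m : ℝ) = mu * ((m + 1 : ℕ) : ℝ) by push_cast; ring]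
      rfl
  -- Part 2
  have h2 : ∀ n m : ℕ, ∀ x,
      vbr ((tapp R)^[n] Z₀) ((tapp R)^[m] Z₀) x
        = (mu * ((m : ℝ) - (n : ℝ))) • ((tapp R)^[n + m] Z₀) x := by
    intro n
    induction n with
    | zero =>
      intro m x
      simpa using h2base m x
    | succ n ih =>
      intro m x
      rw [Function.iterate_succ_apply' (tapp R) n Z₀]
      rw [hanti, hexp, h1 m ((tapp R)^[n] Z₀) (hsm Z₀ hZ₀ n) x,
        hanti ((tapp R)^[m] Z₀) ((tapp R)^[n] Z₀) x, ih m x,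
        hpow Z₀ (m + 1) n x, map_neg, map_smul]
      have e1 : R x (((tapp R)^[n + m] Z₀) x) = ((tapp R)^[n + m + 1] Z₀) x := by
        rw [Function.iterate_succ_apply']; rfl
      rw [e1, show n + (m + 1) = n + m + 1 by omega,
        show n + 1 + m = n + m + 1 by omega,
        neg_add, neg_neg, ← neg_smul, ← add_smul]
      congr 1
      push_cast
      ring
  exact ⟨h1, h2, h3⟩
end

section
/- (Generalized Oevel theorem, part 1) Let X be a vector field, R a Nijenhuis operator with L_X R = 0, and P a (1,1)-tensor with L_X P = a(R) and L_{PX} R = b(R) for polynomials a, b in R. Setting X_i = R^i X, the vector fields commute pairwise: [X_i, X_j] = 0 for all i, j ≥ 0. -/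
open Polynomial

/-- Generalized Oevel theorem, part 1: if `R` is a Nijenhuis recursion
operator of `X` (`ℒ_X R = 0`) and `P` is a (1,1)-tensor with `ℒ_X P = a(R)` and
`ℒ_{PX} R = b(R)` for polynomials `a, b`, then the fields `X_i = R^i X` commute. -/
theorem generalized_oevel_part1
    {E : Type*} [NormedAddCommGroup E] [NormedSpace ℝ E]
    (R P : E → E →L[ℝ] E) (X : E → E) (a b : ℝ[X])
    (hRsmooth : ContDiff ℝ (⊤ : ℕ∞) (fun x => R x))
    (hPsmooth : ContDiff ℝ (⊤ : ℕ∞) (fun x => P x))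
    (hX : ContDiff ℝ (⊤ : ℕ∞) X)
    (hNij : IsNijenhuis R)
    (hrec : ∀ Y : E → E, ContDiff ℝ (⊤ : ℕ∞) Y → ∀ x, lieD X R Y x = 0)
    (hP : ∀ Y : E → E, ContDiff ℝ (⊤ : ℕ∞) Y → ∀ x, lieD X P Y x = aeval (R x) a (Y x))
    (hPX : ∀ Y : E → E, ContDiff ℝ (⊤ : ℕ∞) Y → ∀ x,
        lieD (tapp P X) R Y x = aeval (R x) b (Y x)) :
    ∀ i j : ℕ, ∀ x, vbr ((tapp R)^[i] X) ((tapp R)^[j] X) x = 0 := by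
  have sm : ∀ Y : E → E, ContDiff ℝ (⊤ : ℕ∞) Y → ContDiff ℝ (⊤ : ℕ∞) (tapp R Y) :=
    fun Y hY => hRsmooth.clm_apply hY
  have smI : ∀ i, ContDiff ℝ (⊤ : ℕ∞) ((tapp R)^[i] X) := by
    intro i; induction i with
    | zero => simpa using hX
    | succ i ih => rw [Function.iterate_succ_apply']; exact sm _ ih
  have L1 : ∀ Y, ContDiff ℝ (⊤ : ℕ∞) Y → ∀ x, vbr X (tapp R Y) x = R x (vbr X Y x) := by
    intro Y hY x
    have h := hrec Y hY x
    unfold lieD at h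
    exact sub_eq_zero.mp h
  have L2 : ∀ i x, vbr X ((tapp R)^[i] X) x = 0 := by
    intro i; induction i with
    | zero => intro x; simp [vbr]
    | succ i ih =>
      intro x
      rw [Function.iterate_succ_apply', L1 _ (smI i) x, ih x, map_zero]
  have L3 : ∀ i Y, ContDiff ℝ (⊤ : ℕ∞) Y → ∀ x,
      vbr ((tapp R)^[i] X) (tapp R Y) x = R x (vbr ((tapp R)^[i] X) Y x) := by
    intro i; induction i with
    | zero => exact L1
    | succ i ih =>
      intro Y hY x
      rw [Function.iterate_succ_apply']
      have hN := hNij ((tapp R)^[i] X) Y (smI i) hY x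
      rw [ih Y hY x] at hN
      have h0 : vbr (tapp R ((tapp R)^[i] X)) (tapp R Y) x
          - R x (vbr (tapp R ((tapp R)^[i] X)) Y x) = 0 := by
        have := hN
        abel_nf at this ⊢
        exact this
      exact sub_eq_zero.mp h0
  intro i j
  induction j with
  | zero =>
    intro x
    have : vbr ((tapp R)^[i] X) X x = - vbr X ((tapp R)^[i] X) x := by
      simp [vbr]
    simp [this, L2 i x]
  | succ j ih =>
    intro x
    rw [Function.iterate_succ_apply', L3 i _ (smI j) x, ih x, map_zero]
end

section
/- (Generalized Oevel theorem, parts 2 and 3) Under the hypotheses L_X R = 0 (R Nijenhuis), L_X P = a(R), L_{PX} R = b(R), and setting X_i = R^i X and Y_i = R^i(PX), one has [X_i, Y_j] = a(R)(X_{i+j}) − i·b(R)(X_{i+j−1}) and [Y_i, Y_j] = (j−i)·b(R)(Y_{i+j−1}) for all i, j ≥ 0. -/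
open Polynomial

section Aux

variable {E : Type*} [NormedAddCommGroup E] [NormedSpace ℝ E]

lemma vbr_self (Z : E → E) (x : E) : vbr Z Z x = 0 := sub_self _

lemma vbr_antisymm (Z W : E → E) (x : E) : vbr Z W x = - vbr W Z x := by
  simp [vbr]

lemma vbr_tapp (T : E → E →L[ℝ] E) (Z W : E → E) (x : E) :
    vbr Z (tapp T W) x = T x (vbr Z W x) + lieD Z T W x := by
  simp [lieD]

lemma tapp_smooth (T : E → E →L[ℝ] E) (hT : ContDiff ℝ (⊤ : ℕ∞) (fun x => T x))
    (Z : E → E) (hZ : ContDiff ℝ (⊤ : ℕ∞) Z) : ContDiff ℝ (⊤ : ℕ∞) (tapp T Z) :=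
  hT.clm_apply hZ

lemma iter_smooth (T : E → E →L[ℝ] E) (hT : ContDiff ℝ (⊤ : ℕ∞) (fun x => T x))
    (Z : E → E) (hZ : ContDiff ℝ (⊤ : ℕ∞) Z) (k : ℕ) :
    ContDiff ℝ (⊤ : ℕ∞) ((tapp T)^[k] Z) := by
  induction k with
  | zero => exact hZ
  | succ k ih => rw [Function.iterate_succ_apply']; exact tapp_smooth T hT _ ih

lemma iter_apply (T : E → E →L[ℝ] E) (Z : E → E) (k : ℕ) (x : E) :
    (tapp T)^[k] Z x = ((T x)^k) (Z x) := by
  induction k with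
  | zero => simp
  | succ k ih =>
      rw [Function.iterate_succ_apply', pow_succ', ContinuousLinearMap.mul_apply]
      simp [tapp, ih]

lemma aeval_pow_comm (S : E →L[ℝ] E) (p : ℝ[X]) (n : ℕ) (v : E) :
    aeval S p ((S ^ n) v) = (S ^ n) (aeval S p v) := by
  have h1 : aeval S p * S ^ n = S ^ n * aeval S p := by
    have h0 : S ^ n = aeval S ((X:ℝ[X])^n) := by simp
    rw [h0, ← map_mul, ← map_mul, mul_comm]
  calc aeval S p ((S ^ n) v) = (aeval S p * S ^ n) v := rfl
    _ = (S ^ n * aeval S p) v := by rw [h1]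
    _ = (S ^ n) (aeval S p v) := rfl

lemma pow_succ_apply (S : E →L[ℝ] E) (n : ℕ) (v : E) :
    S ((S ^ n) v) = (S ^ (n+1)) v := by
  rw [pow_succ']; rfl

lemma nijenhuis_transfer (R : E → E →L[ℝ] E) (hNij : IsNijenhuis R)
    (Z Y : E → E) (hZ : ContDiff ℝ (⊤ : ℕ∞) Z) (hY : ContDiff ℝ (⊤ : ℕ∞) Y) (x : E) :
    lieD (tapp R Z) R Y x = R x (lieD Z R Y x) := by
  have h := hNij Z Y hZ hY x
  have h2 : lieD (tapp R Z) R Y x - R x (lieD Z R Y x) = 0 := by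
    simp only [lieD, map_sub]
    rw [← h]; abel
  exact sub_eq_zero.mp h2

lemma pow_pow_apply (S : E →L[ℝ] E) (m n : ℕ) (v : E) :
    (S ^ m) ((S ^ n) v) = (S ^ (n + m)) v := by
  rw [← ContinuousLinearMap.mul_apply, ← pow_add, add_comm]

lemma step_lemma (R : E → E →L[ℝ] E) (p : ℝ[X]) (Z : E → E) (k : ℕ) (x : E) :
    R x (aeval (R x) p ((tapp R)^[k] Z x)) = aeval (R x) p ((tapp R)^[k+1] Z x) := by
  rw [iter_apply, iter_apply, aeval_pow_comm, aeval_pow_comm, pow_succ_apply]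

end Aux

/-- Generalized Oevel theorem, parts 2 and 3: with `X_i = R^i X`,
`Y_i = R^i (PX)`, under `ℒ_X R = 0`, `ℒ_X P = a(R)`, `ℒ_{PX} R = b(R)`:
`[X_i, Y_j] = a(R) X_{i+j} − i b(R) X_{i+j−1}` and `[Y_i, Y_j] = (j−i) b(R) Y_{i+j−1}`. -/
theorem generalized_oevel_parts2_3
    {E : Type*} [NormedAddCommGroup E] [NormedSpace ℝ E]
    (R P : E → E →L[ℝ] E) (X : E → E) (a b : ℝ[X])
    (hRsmooth : ContDiff ℝ (⊤ : ℕ∞) (fun x => R x))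
    (hPsmooth : ContDiff ℝ (⊤ : ℕ∞) (fun x => P x))
    (hX : ContDiff ℝ (⊤ : ℕ∞) X)
    (hNij : IsNijenhuis R)
    (hrec : ∀ Y : E → E, ContDiff ℝ (⊤ : ℕ∞) Y → ∀ x, lieD X R Y x = 0)
    (hP : ∀ Y : E → E, ContDiff ℝ (⊤ : ℕ∞) Y → ∀ x, lieD X P Y x = aeval (R x) a (Y x))
    (hPX : ∀ Y : E → E, ContDiff ℝ (⊤ : ℕ∞) Y → ∀ x,
        lieD (tapp P X) R Y x = aeval (R x) b (Y x)) :
    (∀ i j : ℕ, ∀ x,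
        vbr ((tapp R)^[i] X) ((tapp R)^[j] (tapp P X)) x
          = aeval (R x) a (((tapp R)^[i + j] X) x)
              - (i : ℝ) • aeval (R x) b (((tapp R)^[i + j - 1] X) x)) ∧
    (∀ i j : ℕ, ∀ x,
        vbr ((tapp R)^[i] (tapp P X)) ((tapp R)^[j] (tapp P X)) x
          = ((j : ℝ) - (i : ℝ)) • aeval (R x) b (((tapp R)^[i + j - 1] (tapp P X)) x)) := by
  have hPXs : ContDiff ℝ (⊤ : ℕ∞) (tapp P X) := tapp_smooth P hPsmooth X hX
  have hXi : ∀ i, ContDiff ℝ (⊤ : ℕ∞) ((tapp R)^[i] X) := iter_smooth R hRsmooth X hX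
  have hYi : ∀ i, ContDiff ℝ (⊤ : ℕ∞) ((tapp R)^[i] (tapp P X)) :=
    iter_smooth R hRsmooth _ hPXs
  -- L_{X_i} R = 0
  have hrecN : ∀ i, ∀ Y : E → E, ContDiff ℝ (⊤ : ℕ∞) Y → ∀ x,
      lieD ((tapp R)^[i] X) R Y x = 0 := by
    intro i
    induction i with
    | zero => exact hrec
    | succ i ih =>
        intro Y hY x
        rw [Function.iterate_succ_apply',
          nijenhuis_transfer R hNij _ Y (hXi i) hY x, ih Y hY x, map_zero]
  -- L_{Y_i} R = R^i b(R)
  have hPXN : ∀ i, ∀ Y : E → E, ContDiff ℝ (⊤ : ℕ∞) Y → ∀ x,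
      lieD ((tapp R)^[i] (tapp P X)) R Y x = ((R x)^i) (aeval (R x) b (Y x)) := by
    intro i
    induction i with
    | zero => intro Y hY x; simpa using hPX Y hY x
    | succ i ih =>
        intro Y hY x
        rw [Function.iterate_succ_apply',
          nijenhuis_transfer R hNij _ Y (hYi i) hY x, ih Y hY x, pow_succ_apply]
  -- part 2
  have part2 : ∀ i j : ℕ, ∀ x,
      vbr ((tapp R)^[i] X) ((tapp R)^[j] (tapp P X)) x
        = aeval (R x) a (((tapp R)^[i + j] X) x)
            - (i : ℝ) • aeval (R x) b (((tapp R)^[i + j - 1] X) x) := by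
    intro i
    induction i with
    | zero =>
        intro j
        induction j with
        | zero =>
            intro x
            simp only [Function.iterate_zero, id_eq, Nat.cast_zero, zero_smul,
              sub_zero, Nat.zero_add, Nat.add_zero]
            rw [vbr_tapp P X X x, vbr_self, map_zero, zero_add, hP X hX x]
        | succ j ihj =>
            intro x
            rw [Function.iterate_succ_apply' (tapp R) j (tapp P X),
              vbr_tapp R, ihj x, hrecN 0 _ (hYi j) x, add_zero]
            simp only [Nat.cast_zero, zero_smul, sub_zero, Nat.zero_add]
            exact step_lemma R a X j x
    | succ i ih =>
        intro j x
        rw [Function.iterate_succ_apply' (tapp R) i X,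
          vbr_antisymm, vbr_tapp R, hPXN j _ (hXi i) x,
          vbr_antisymm ((tapp R)^[j] (tapp P X)) ((tapp R)^[i] X), ih j x]
        have e2 : i + 1 + j = i + j + 1 := by omega
        have e4 : i + j + 1 - 1 = i + j := by omega
        have T1 := step_lemma R a X (i+j) x
        have T3 : ((R x)^j) (aeval (R x) b ((tapp R)^[i] X x))
            = aeval (R x) b ((tapp R)^[i+j] X x) := by
          rw [iter_apply, iter_apply, aeval_pow_comm, pow_pow_apply, ← aeval_pow_comm]
        have T2' : (i:ℝ) • (R x) (aeval (R x) b ((tapp R)^[i+j-1] X x))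
            = (i:ℝ) • aeval (R x) b ((tapp R)^[i+j] X x) := by
          rcases Nat.eq_zero_or_pos i with hi | hi
          · subst hi; simp
          · have e3 : i + j - 1 + 1 = i + j := by omega
            rw [step_lemma, e3]
        rw [e2, e4, map_neg, map_sub, map_smul, T1, T3, T2']
        push_cast
        rw [add_smul, one_smul]
        abel
  -- part 3
  have part3 : ∀ i j : ℕ, ∀ x,
      vbr ((tapp R)^[i] (tapp P X)) ((tapp R)^[j] (tapp P X)) x
        = ((j : ℝ) - (i : ℝ)) • aeval (R x) b (((tapp R)^[i + j - 1] (tapp P X)) x) := by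
    intro i
    induction i with
    | zero =>
        intro j
        induction j with
        | zero =>
            intro x
            simp [vbr_self]
        | succ j ihj =>
            intro x
            rw [Function.iterate_succ_apply' (tapp R) j (tapp P X),
              vbr_tapp R, ihj x, hPXN 0 _ (hYi j) x]
            simp only [pow_zero, ContinuousLinearMap.one_apply, Nat.zero_add,
              Nat.cast_zero, sub_zero]
            have e : j + 1 - 1 = j := by omega
            rw [e, map_smul]
            have T2' : (j:ℝ) • (R x) (aeval (R x) b ((tapp R)^[j-1] (tapp P X) x))
                = (j:ℝ) • aeval (R x) b ((tapp R)^[j] (tapp P X) x) := by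
              rcases Nat.eq_zero_or_pos j with hj | hj
              · subst hj; simp
              · have e3 : j - 1 + 1 = j := by omega
                rw [step_lemma, e3]
            rw [T2']
            push_cast
            rw [add_smul, one_smul]
    | succ i ih =>
        intro j x
        rw [Function.iterate_succ_apply' (tapp R) i (tapp P X),
          vbr_antisymm, vbr_tapp R, hPXN j _ (hYi i) x,
          vbr_antisymm ((tapp R)^[j] (tapp P X)) ((tapp R)^[i] (tapp P X)), ih j x]
        have e2 : i + 1 + j - 1 = i + j := by omega
        rw [e2]
        have T3 : ((R x)^j) (aeval (R x) b ((tapp R)^[i] (tapp P X) x))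
            = aeval (R x) b ((tapp R)^[i+j] (tapp P X) x) := by
          rw [iter_apply, iter_apply, aeval_pow_comm, pow_pow_apply, ← aeval_pow_comm]
        have T2' : ((j:ℝ) - (i:ℝ)) • (R x) (aeval (R x) b ((tapp R)^[i+j-1] (tapp P X) x))
            = ((j:ℝ) - (i:ℝ)) • aeval (R x) b ((tapp R)^[i+j] (tapp P X) x) := by
          rcases Nat.eq_zero_or_pos (i+j) with hij | hij
          · have h0 : i = 0 ∧ j = 0 := by omega
            rw [h0.1, h0.2]; simp
          · have e3 : i + j - 1 + 1 = i + j := by omega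
            rw [step_lemma, e3]
        rw [map_neg, map_smul, T3, T2']
        push_cast
        module
  exact ⟨part2, part3⟩
end

section
/- On ℝ^{2n} with coordinates (q_i, p_i), let E_i = (p_i² + q_i²)/2 and let Λ_0 = Σ_i ∂/∂p_i ∧ ∂/∂q_i be the canonical Poisson tensor and Λ_1 = Σ_i E_i (∂/∂p_i ∧ ∂/∂q_i). Then Λ_1 is a Poisson tensor and Λ_0 and Λ_1 are compatible, i.e., the Schouten bracket [Λ_0 + Λ_1, Λ_0 + Λ_1] = 0. -/
/-- Partial derivative in the `q`-direction `i` on ℝ^{2n} = {(q,p)}. -/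
noncomputable def dq {n : ℕ} (f : (Fin n → ℝ) × (Fin n → ℝ) → ℝ) (i : Fin n)
    (x : (Fin n → ℝ) × (Fin n → ℝ)) : ℝ :=
  fderiv ℝ f x (Pi.single i 1, 0)

/-- Partial derivative in the `p`-direction `i`. -/
noncomputable def dp {n : ℕ} (f : (Fin n → ℝ) × (Fin n → ℝ) → ℝ) (i : Fin n)
    (x : (Fin n → ℝ) × (Fin n → ℝ)) : ℝ :=
  fderiv ℝ f x (0, Pi.single i 1)

/-- The energies `E_i = (p_i² + q_i²)/2`. -/
noncomputable def En {n : ℕ} (i : Fin n) (x : (Fin n → ℝ) × (Fin n → ℝ)) : ℝ :=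
  ((x.2 i) ^ 2 + (x.1 i) ^ 2) / 2

/-- Bracket of the canonical Poisson tensor `Λ₀ = Σ ∂/∂p_i ∧ ∂/∂q_i`. -/
noncomputable def pb0 {n : ℕ} (f g : (Fin n → ℝ) × (Fin n → ℝ) → ℝ)
    (x : (Fin n → ℝ) × (Fin n → ℝ)) : ℝ :=
  ∑ i, (dp f i x * dq g i x - dq f i x * dp g i x)

/-- Bracket of `Λ₁ = Σ E_i ∂/∂p_i ∧ ∂/∂q_i`. -/
noncomputable def pb1 {n : ℕ} (f g : (Fin n → ℝ) × (Fin n → ℝ) → ℝ)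
    (x : (Fin n → ℝ) × (Fin n → ℝ)) : ℝ :=
  ∑ i, En i x * (dp f i x * dq g i x - dq f i x * dp g i x)

/- ### Auxiliary development -/

local notation "Sp" n => (Fin n → ℝ) × (Fin n → ℝ)

/-- Directional derivative along a fixed vector. -/
noncomputable def DD {n : ℕ} (v : Sp n) (f : (Sp n) → ℝ) (x : Sp n) : ℝ := fderiv ℝ f x v

/-- The `q_i` coordinate direction. -/
def vq {n : ℕ} (i : Fin n) : Sp n := (Pi.single i 1, 0)

/-- The `p_i` coordinate direction. -/
def vp {n : ℕ} (i : Fin n) : Sp n := (0, Pi.single i 1)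

lemma DD_smooth {n : ℕ} {f : (Sp n) → ℝ} (hf : ContDiff ℝ (⊤ : ℕ∞) f) (v : Sp n) :
    ContDiff ℝ (⊤ : ℕ∞) (DD v f) :=
  (hf.fderiv_right (by simp)).clm_apply contDiff_const

lemma DD_symm {n : ℕ} {f : (Sp n) → ℝ} (hf : ContDiff ℝ (⊤ : ℕ∞) f) (v w : Sp n) (x : Sp n) :
    DD v (DD w f) x = DD w (DD v f) x := by
  have hs : IsSymmSndFDerivAt ℝ f x :=
    hf.contDiffAt.isSymmSndFDerivAt (by norm_num; exact WithTop.coe_le_coe.mpr le_top)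
  have hd : DifferentiableAt ℝ (fderiv ℝ f) x :=
    ((show ContDiff ℝ 1 (fderiv ℝ f) from hf.fderiv_right (WithTop.coe_le_coe.mpr le_top)).differentiable one_ne_zero).differentiableAt
  have key : ∀ u w : Sp n, DD u (DD w f) x = fderiv ℝ (fderiv ℝ f) x u w := by
    intro u w
    show fderiv ℝ (fun y => (fderiv ℝ f y) w) x u = _
    rw [fderiv_clm_apply hd (differentiableAt_const w)]
    simp
  rw [key, key, hs.eq]

lemma DD_mul {n : ℕ} {f g : (Sp n) → ℝ} {x : Sp n} (hf : DifferentiableAt ℝ f x)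
    (hg : DifferentiableAt ℝ g x) (v : Sp n) :
    DD v (fun y => f y * g y) x = DD v f x * g x + f x * DD v g x := by
  simp only [DD]
  rw [fderiv_fun_mul hf hg]
  simp
  ring

lemma DD_sub {n : ℕ} {f g : (Sp n) → ℝ} {x : Sp n} (hf : DifferentiableAt ℝ f x)
    (hg : DifferentiableAt ℝ g x) (v : Sp n) :
    DD v (fun y => f y - g y) x = DD v f x - DD v g x := by
  simp only [DD]
  rw [fderiv_fun_sub hf hg]
  simp

lemma DD_const_add {n : ℕ} {f : (Sp n) → ℝ} {x : Sp n} (c : ℝ) (v : Sp n) :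
    DD v (fun y => c + f y) x = DD v f x := by
  simp only [DD, fderiv_const_add]

lemma DD_sum {n : ℕ} {ι : Type*} (s : Finset ι) {F : ι → (Sp n) → ℝ} {x : Sp n}
    (hF : ∀ j ∈ s, DifferentiableAt ℝ (F j) x) (v : Sp n) :
    DD v (fun y => ∑ j ∈ s, F j y) x = ∑ j ∈ s, DD v (F j) x := by
  simp only [DD]
  rw [fderiv_fun_sum hF]
  simp

noncomputable def Lq {n : ℕ} (i : Fin n) : (Sp n) →L[ℝ] ℝ :=
  (ContinuousLinearMap.proj i).comp (ContinuousLinearMap.fst ℝ (Fin n → ℝ) (Fin n → ℝ))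
noncomputable def Lp {n : ℕ} (i : Fin n) : (Sp n) →L[ℝ] ℝ :=
  (ContinuousLinearMap.proj i).comp (ContinuousLinearMap.snd ℝ (Fin n → ℝ) (Fin n → ℝ))

lemma En_eq {n : ℕ} (i : Fin n) :
    En (n := n) i = fun y => (2:ℝ)⁻¹ * (Lp i y * Lp i y + Lq i y * Lq i y) := by
  funext y; simp [En, Lp, Lq]; ring

lemma En_smooth {n : ℕ} (i : Fin n) : ContDiff ℝ (⊤ : ℕ∞) (En (n := n) i) := by
  rw [En_eq]
  exact contDiff_const.mul (((Lp i).contDiff.mul (Lp i).contDiff).add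
    ((Lq i).contDiff.mul (Lq i).contDiff))

lemma En_hasFDerivAt {n : ℕ} (i : Fin n) (x : Sp n) :
    HasFDerivAt (En i)
      ((2:ℝ)⁻¹ • ((x.2 i • Lp i + x.2 i • Lp i) + (x.1 i • Lq i + x.1 i • Lq i))) x := by
  rw [En_eq]
  have h := (((Lp i).hasFDerivAt (x := x)).mul ((Lp i).hasFDerivAt (x := x))).add
    (((Lq i).hasFDerivAt (x := x)).mul ((Lq i).hasFDerivAt (x := x)))
  have h2 := h.const_mul ((2:ℝ)⁻¹)
  have e : (Lp i) x = x.2 i := rfl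
  have e' : (Lq i) x = x.1 i := rfl
  rw [e, e'] at h2
  exact h2

lemma DD_En_q {n : ℕ} (i j : Fin n) (x : Sp n) :
    DD (vq j) (En i) x = if i = j then x.1 i else 0 := by
  simp only [DD, vq, (En_hasFDerivAt i x).fderiv]
  by_cases h : i = j <;> simp [Lq, Lp, Pi.single_apply, h] <;> ring

lemma DD_En_p {n : ℕ} (i j : Fin n) (x : Sp n) :
    DD (vp j) (En i) x = if i = j then x.2 i else 0 := by
  simp only [DD, vp, (En_hasFDerivAt i x).fderiv]
  by_cases h : i = j <;> simp [Lq, Lp, Pi.single_apply, h] <;> ring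

/-- The bracket of `Λ_c = Σ (c + E_i) ∂/∂p_i ∧ ∂/∂q_i`. -/
noncomputable def pbc {n : ℕ} (c : ℝ) (f g : (Sp n) → ℝ) (x : Sp n) : ℝ :=
  ∑ i, (c + En i x) * (dp f i x * dq g i x - dq f i x * dp g i x)

lemma dq_smooth {n : ℕ} {f : (Sp n) → ℝ} (hf : ContDiff ℝ (⊤ : ℕ∞) f) (i : Fin n) :
    ContDiff ℝ (⊤ : ℕ∞) (dq f i) := DD_smooth hf (vq i)

lemma dp_smooth {n : ℕ} {f : (Sp n) → ℝ} (hf : ContDiff ℝ (⊤ : ℕ∞) f) (i : Fin n) :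
    ContDiff ℝ (⊤ : ℕ∞) (dp f i) := DD_smooth hf (vp i)

lemma K_smooth {n : ℕ} {g h : (Sp n) → ℝ} (hg : ContDiff ℝ (⊤ : ℕ∞) g) (hh : ContDiff ℝ (⊤ : ℕ∞) h)
    (j : Fin n) :
    ContDiff ℝ (⊤ : ℕ∞) (fun y => dp g j y * dq h j y - dq g j y * dp h j y) :=
  ((dp_smooth hg j).mul (dq_smooth hh j)).sub ((dq_smooth hg j).mul (dp_smooth hh j))

lemma term_smooth {n : ℕ} (c : ℝ) {g h : (Sp n) → ℝ} (hg : ContDiff ℝ (⊤ : ℕ∞) g)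
    (hh : ContDiff ℝ (⊤ : ℕ∞) h) (j : Fin n) :
    ContDiff ℝ (⊤ : ℕ∞) (fun y => (c + En j y) * (dp g j y * dq h j y - dq g j y * dp h j y)) :=
  (contDiff_const.add (En_smooth j)).mul (K_smooth hg hh j)

lemma DD_pbc {n : ℕ} (c : ℝ) {g h : (Sp n) → ℝ} (hg : ContDiff ℝ (⊤ : ℕ∞) g)
    (hh : ContDiff ℝ (⊤ : ℕ∞) h) (v : Sp n) (x : Sp n) :
    DD v (pbc c g h) x
      = ∑ j, (DD v (En j) x * (dp g j x * dq h j x - dq g j x * dp h j x)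
        + (c + En j x) * (DD v (dp g j) x * dq h j x + dp g j x * DD v (dq h j) x
            - DD v (dq g j) x * dp h j x - dq g j x * DD v (dp h j) x)) := by
  have dAt : ∀ {u : (Sp n) → ℝ}, ContDiff ℝ (⊤ : ℕ∞) u → DifferentiableAt ℝ u x :=
    fun hu => (hu.differentiable (by simp)).differentiableAt
  rw [show DD v (pbc c g h) x
      = DD v (fun y => ∑ j, (c + En j y) * (dp g j y * dq h j y - dq g j y * dp h j y)) x
      from rfl,
    DD_sum Finset.univ (fun j _ => dAt (term_smooth c hg hh j)) v]
  refine Finset.sum_congr rfl fun j _ => ?_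
  rw [DD_mul (dAt (contDiff_const.add (En_smooth j))) (dAt (K_smooth hg hh j)) v,
    DD_const_add, DD_sub (dAt ((dp_smooth hg j).mul (dq_smooth hh j)))
      (dAt ((dq_smooth hg j).mul (dp_smooth hh j))) v,
    DD_mul (dAt (dp_smooth hg j)) (dAt (dq_smooth hh j)) v,
    DD_mul (dAt (dq_smooth hg j)) (dAt (dp_smooth hh j)) v]
  ring

lemma dq_pbc {n : ℕ} (c : ℝ) {g h : (Sp n) → ℝ} (hg : ContDiff ℝ (⊤ : ℕ∞) g)
    (hh : ContDiff ℝ (⊤ : ℕ∞) h) (i : Fin n) (x : Sp n) :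
    dq (pbc c g h) i x
      = x.1 i * (dp g i x * dq h i x - dq g i x * dp h i x)
        + ∑ j, (c + En j x) * (DD (vq i) (dp g j) x * dq h j x
            + dp g j x * DD (vq i) (dq h j) x
            - DD (vq i) (dq g j) x * dp h j x - dq g j x * DD (vq i) (dp h j) x) := by
  rw [show dq (pbc c g h) i x = DD (vq i) (pbc c g h) x from rfl, DD_pbc c hg hh (vq i) x,
    Finset.sum_add_distrib]
  congr 1
  simp only [DD_En_q, ite_mul, zero_mul, Finset.sum_ite_eq', Finset.mem_univ, if_true]

lemma dp_pbc {n : ℕ} (c : ℝ) {g h : (Sp n) → ℝ} (hg : ContDiff ℝ (⊤ : ℕ∞) g)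
    (hh : ContDiff ℝ (⊤ : ℕ∞) h) (i : Fin n) (x : Sp n) :
    dp (pbc c g h) i x
      = x.2 i * (dp g i x * dq h i x - dq g i x * dp h i x)
        + ∑ j, (c + En j x) * (DD (vp i) (dp g j) x * dq h j x
            + dp g j x * DD (vp i) (dq h j) x
            - DD (vp i) (dq g j) x * dp h j x - dq g j x * DD (vp i) (dp h j) x) := by
  rw [show dp (pbc c g h) i x = DD (vp i) (pbc c g h) x from rfl, DD_pbc c hg hh (vp i) x,
    Finset.sum_add_distrib]
  congr 1
  simp only [DD_En_p, ite_mul, zero_mul, Finset.sum_ite_eq', Finset.mem_univ, if_true]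

lemma stage2 {ι : Type*} [Fintype ι] (P1 P2 P3 : ι → ℝ) (U1 U2 U3 : ι → ι → ℝ)
    (hP : ∀ i, P1 i + P2 i + P3 i = 0)
    (hU : ∀ i j, (U1 i j + U2 i j + U3 i j) + (U1 j i + U2 j i + U3 j i) = 0) :
    (∑ i, P1 i + ∑ i, ∑ j, U1 i j) + (∑ i, P2 i + ∑ i, ∑ j, U2 i j)
      + (∑ i, P3 i + ∑ i, ∑ j, U3 i j) = 0 := by
  have e1 : ∑ i, P1 i + ∑ i, P2 i + ∑ i, P3 i = 0 := by
    rw [← Finset.sum_add_distrib, ← Finset.sum_add_distrib]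
    exact Finset.sum_eq_zero fun i _ => hP i
  have key : ∀ U : ι → ι → ℝ, (∀ i j, U i j + U j i = 0) → (∑ i, ∑ j, U i j) = 0 := by
    intro U hUU
    have h2 : (∑ i, ∑ j, U i j) + (∑ i, ∑ j, U i j) = 0 := by
      nth_rewrite 2 [Finset.sum_comm]
      rw [← Finset.sum_add_distrib]
      refine Finset.sum_eq_zero fun i _ => ?_
      rw [← Finset.sum_add_distrib]
      exact Finset.sum_eq_zero fun j _ => hUU i j
    linarith
  have e3 : (∑ i, ∑ j, U1 i j) + (∑ i, ∑ j, U2 i j) + (∑ i, ∑ j, U3 i j)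
      = ∑ i, ∑ j, (U1 i j + U2 i j + U3 i j) := by
    rw [← Finset.sum_add_distrib, ← Finset.sum_add_distrib]
    refine Finset.sum_congr rfl fun i _ => ?_
    rw [← Finset.sum_add_distrib, ← Finset.sum_add_distrib]
  have e2 := key _ hU
  linarith

lemma alg {ι : Type*} [Fintype ι]
    (A q p Fq Fp Gq Gp Hq Hp : ι → ℝ)
    (fQQ fQP fPQ fPP gQQ gQP gPQ gPP hQQ hQP hPQ hPP : ι → ι → ℝ)
    (sfQQ : ∀ i j, fQQ j i = fQQ i j) (sfPP : ∀ i j, fPP j i = fPP i j)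
    (sgQQ : ∀ i j, gQQ j i = gQQ i j) (sgPP : ∀ i j, gPP j i = gPP i j)
    (shQQ : ∀ i j, hQQ j i = hQQ i j) (shPP : ∀ i j, hPP j i = hPP i j)
    (sfPQ : ∀ i j, fPQ i j = fQP j i) (sgPQ : ∀ i j, gPQ i j = gQP j i)
    (shPQ : ∀ i j, hPQ i j = hQP j i) :
    ∑ i, A i * (Fp i * (q i * (Gp i * Hq i - Gq i * Hp i)
          + ∑ j, A j * (gQP i j * Hq j + Gp j * hQQ i j - gQQ i j * Hp j - Gq j * hQP i j))
       - Fq i * (p i * (Gp i * Hq i - Gq i * Hp i)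
          + ∑ j, A j * (gPP i j * Hq j + Gp j * hPQ i j - gPQ i j * Hp j - Gq j * hPP i j)))
    + ∑ i, A i * (Gp i * (q i * (Hp i * Fq i - Hq i * Fp i)
          + ∑ j, A j * (hQP i j * Fq j + Hp j * fQQ i j - hQQ i j * Fp j - Hq j * fQP i j))
       - Gq i * (p i * (Hp i * Fq i - Hq i * Fp i)
          + ∑ j, A j * (hPP i j * Fq j + Hp j * fPQ i j - hPQ i j * Fp j - Hq j * fPP i j)))
    + ∑ i, A i * (Hp i * (q i * (Fp i * Gq i - Fq i * Gp i)
          + ∑ j, A j * (fQP i j * Gq j + Fp j * gQQ i j - fQQ i j * Gp j - Fq j * gQP i j))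
       - Hq i * (p i * (Fp i * Gq i - Fq i * Gp i)
          + ∑ j, A j * (fPP i j * Gq j + Fp j * gPQ i j - fPQ i j * Gp j - Fq j * gPP i j)))
    = 0 := by
  have split : ∀ (Fq Fp Gq Gp Hq Hp : ι → ℝ) (L M : ι → ι → ℝ),
      ∑ i, A i * (Fp i * (q i * (Gp i * Hq i - Gq i * Hp i) + ∑ j, A j * L i j)
         - Fq i * (p i * (Gp i * Hq i - Gq i * Hp i) + ∑ j, A j * M i j))
      = ∑ i, (A i * (Fp i * q i - Fq i * p i) * (Gp i * Hq i - Gq i * Hp i))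
        + ∑ i, ∑ j, (A i * A j * (Fp i * L i j - Fq i * M i j)) := by
    intro Fq Fp Gq Gp Hq Hp L M
    rw [← Finset.sum_add_distrib]
    refine Finset.sum_congr rfl fun i _ => ?_
    have hT : ∑ j, A i * A j * (Fp i * L i j - Fq i * M i j)
        = A i * Fp i * (∑ j, A j * L i j) - A i * Fq i * (∑ j, A j * M i j) := by
      rw [Finset.mul_sum, Finset.mul_sum, ← Finset.sum_sub_distrib]
      exact Finset.sum_congr rfl fun j _ => by ring
    rw [hT]; ring
  rw [split, split, split]
  refine stage2 _ _ _ _ _ _ (fun i => by ring) (fun i j => ?_)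
  by_cases hij : i = j
  · subst hij
    rw [sfPQ i i, sgPQ i i, shPQ i i]; ring
  · rw [sfQQ i j, sgQQ i j, shQQ i j, sfPP i j, sgPP i j, shPP i j,
      sfPQ i j, sfPQ j i, sgPQ i j, sgPQ j i, shPQ i j, shPQ j i]
    ring

lemma jac {n : ℕ} (c : ℝ) {f g h : (Sp n) → ℝ} (hf : ContDiff ℝ (⊤ : ℕ∞) f)
    (hg : ContDiff ℝ (⊤ : ℕ∞) g) (hh : ContDiff ℝ (⊤ : ℕ∞) h) (x : Sp n) :
    pbc c f (pbc c g h) x + pbc c g (pbc c h f) x + pbc c h (pbc c f g) x = 0 := by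
  show (∑ i, (c + En i x) * (dp f i x * dq (pbc c g h) i x - dq f i x * dp (pbc c g h) i x))
    + (∑ i, (c + En i x) * (dp g i x * dq (pbc c h f) i x - dq g i x * dp (pbc c h f) i x))
    + (∑ i, (c + En i x) * (dp h i x * dq (pbc c f g) i x - dq h i x * dp (pbc c f g) i x))
    = 0
  simp only [dq_pbc c hg hh, dp_pbc c hg hh, dq_pbc c hh hf, dp_pbc c hh hf,
    dq_pbc c hf hg, dp_pbc c hf hg]
  exact alg (fun i => c + En i x) (fun i => x.1 i) (fun i => x.2 i)
    (fun i => dq f i x) (fun i => dp f i x)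
    (fun i => dq g i x) (fun i => dp g i x)
    (fun i => dq h i x) (fun i => dp h i x)
    (fun i j => DD (vq i) (dq f j) x) (fun i j => DD (vq i) (dp f j) x)
    (fun i j => DD (vp i) (dq f j) x) (fun i j => DD (vp i) (dp f j) x)
    (fun i j => DD (vq i) (dq g j) x) (fun i j => DD (vq i) (dp g j) x)
    (fun i j => DD (vp i) (dq g j) x) (fun i j => DD (vp i) (dp g j) x)
    (fun i j => DD (vq i) (dq h j) x) (fun i j => DD (vq i) (dp h j) x)
    (fun i j => DD (vp i) (dq h j) x) (fun i j => DD (vp i) (dp h j) x)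
    (fun i j => DD_symm hf (vq j) (vq i) x) (fun i j => DD_symm hf (vp j) (vp i) x)
    (fun i j => DD_symm hg (vq j) (vq i) x) (fun i j => DD_symm hg (vp j) (vp i) x)
    (fun i j => DD_symm hh (vq j) (vq i) x) (fun i j => DD_symm hh (vp j) (vp i) x)
    (fun i j => DD_symm hf (vp i) (vq j) x) (fun i j => DD_symm hg (vp i) (vq j) x)
    (fun i j => DD_symm hh (vp i) (vq j) x)

/-- `Λ₁` is a Poisson tensor (its bracket satisfies Jacobi) and `Λ₀` and
`Λ₁` are compatible (the bracket of `Λ₀ + Λ₁` satisfies Jacobi). -/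
theorem oscillator_poisson_pair_compatible (n : ℕ) :
    (∀ f g h : (Fin n → ℝ) × (Fin n → ℝ) → ℝ,
        ContDiff ℝ (⊤ : ℕ∞) f → ContDiff ℝ (⊤ : ℕ∞) g → ContDiff ℝ (⊤ : ℕ∞) h → ∀ x,
          pb1 f (pb1 g h) x + pb1 g (pb1 h f) x + pb1 h (pb1 f g) x = 0) ∧
    (∀ f g h : (Fin n → ℝ) × (Fin n → ℝ) → ℝ,
        ContDiff ℝ (⊤ : ℕ∞) f → ContDiff ℝ (⊤ : ℕ∞) g → ContDiff ℝ (⊤ : ℕ∞) h → ∀ x,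
          (fun u v y => pb0 u v y + pb1 u v y) f
              (fun y => pb0 g h y + pb1 g h y) x
            + (fun u v y => pb0 u v y + pb1 u v y) g
              (fun y => pb0 h f y + pb1 h f y) x
            + (fun u v y => pb0 u v y + pb1 u v y) h
              (fun y => pb0 f g y + pb1 f g y) x = 0) := by
  constructor
  · intro f g h hf hg hh x
    have h01 : ∀ u v : (Sp n) → ℝ, pb1 u v = pbc 0 u v := by
      intro u v; funext y; simp [pb1, pbc]
    simp only [h01]
    exact jac 0 hf hg hh x
  · intro f g h hf hg hh x
    have h1 : ∀ u v : (Sp n) → ℝ, (fun y => pb0 u v y + pb1 u v y) = pbc 1 u v := by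
      intro u v; funext y
      simp only [pb0, pb1, pbc]
      rw [← Finset.sum_add_distrib]
      exact Finset.sum_congr rfl fun i _ => by ring
    show pb0 f (fun y => pb0 g h y + pb1 g h y) x + pb1 f (fun y => pb0 g h y + pb1 g h y) x
      + (pb0 g (fun y => pb0 h f y + pb1 h f y) x + pb1 g (fun y => pb0 h f y + pb1 h f y) x)
      + (pb0 h (fun y => pb0 f g y + pb1 f g y) x + pb1 h (fun y => pb0 f g y + pb1 f g y) x)
      = 0
    have h2 : ∀ u v : (Sp n) → ℝ, pb0 u v x + pb1 u v x = pbc 1 u v x :=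
      fun u v => congrFun (h1 u v) x
    rw [h1 g h, h1 h f, h1 f g, h2 f (pbc 1 g h), h2 g (pbc 1 h f), h2 h (pbc 1 f g)]
    exact jac 1 hf hg hh x
end
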